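/- Let n ≥ 1 and let λ be a special orthogonal partition of 2n. Then λ + ζ(λ) is a partition of 2n, its transpose ^t(λ + ζ(λ)) is an orthogonal partition of 2n satisfying ^t(λ + ζ(λ)) ≤ ^tλ in the dominance order, and every orthogonal partition μ of 2n with μ ≤ ^tλ satisfies μ ≤ ^t(λ + ζ(λ)); that is, ^t(λ + ζ(λ)) is the greatest orthogonal partition of 2n dominated by ^tλ. (This is Lemma 1.7 of the paper, combined with the characterization of the duality d given there.) -/

import Mathlib

open Classical

namespace Wald

/-- `S f k = λ_1 + … + λ_k` (partitions are indexed from 1; index 0 is unused). -/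
def S (f : ℕ → ℕ) (k : ℕ) : ℕ := ∑ j ∈ Finset.Icc 1 k, f j

/-- `f` represents a partition of `N`: nonincreasing on indices `≥ 1`,
finitely many nonzero terms, with total sum `N`. -/
structure IsPartition (f : ℕ → ℕ) (N : ℕ) : Prop where
  mono : ∀ ⦃j k : ℕ⦄, 1 ≤ j → j ≤ k → f k ≤ f j
  fin : ∃ m, ∀ j, m < j → f j = 0
  total : ∀ m, (∀ j, m < j → f j = 0) → S f m = N

/-- multiplicity of `i` as a term of the partition -/
noncomputable def mult (f : ℕ → ℕ) (i : ℕ) : ℕ := Set.ncard {j : ℕ | 1 ≤ j ∧ f j = i}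

/-- dominance order: `Dom f g ↔ f ≤ g` -/
def Dom (f g : ℕ → ℕ) : Prop := ∀ k, S f k ≤ S g k

/-- transposed partition: `(transpose f) j = #{i ≥ 1 : f i ≥ j}` for `j ≥ 1` -/
noncomputable def transpose (f : ℕ → ℕ) : ℕ → ℕ :=
  fun j => Set.ncard {i : ℕ | 1 ≤ i ∧ 1 ≤ j ∧ j ≤ f i}

/-- union of two partitions (all terms listed together in nonincreasing order);
it is characterized by `transpose (unionP f g) = transpose f + transpose g`. -/
noncomputable def unionP (f g : ℕ → ℕ) : ℕ → ℕ :=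
  transpose (fun j => transpose f j + transpose g j)

/-- the partition `(1)` -/
def one1 : ℕ → ℕ := fun j => if j = 1 then 1 else 0

/-- symplectic partition: every odd `i ≥ 1` has even multiplicity -/
def Symp (f : ℕ → ℕ) : Prop := ∀ i, Odd i → Even (mult f i)

/-- orthogonal partition: every even `i ≥ 2` has even multiplicity -/
def Orth (f : ℕ → ℕ) : Prop := ∀ i, Even i → 1 ≤ i → Even (mult f i)

/-- `λ_{2j-1} ≡ λ_{2j} (mod 2)` for all `j ≥ 1` (speciality for symplectic
partitions of `2n` and orthogonal partitions of `2n`). -/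
def SpecialPairs (f : ℕ → ℕ) : Prop := ∀ j, 1 ≤ j → f (2*j - 1) % 2 = f (2*j) % 2

/-- speciality for orthogonal partitions of `2n+1`: `λ_1` odd and
`λ_{2j} ≡ λ_{2j+1} (mod 2)` for all `j ≥ 1`. -/
def SpecialOrthOdd (f : ℕ → ℕ) : Prop :=
  Odd (f 1) ∧ ∀ j, 1 ≤ j → f (2*j) % 2 = f (2*j + 1) % 2

/-- `Jord_bp` for symplectic partitions: even `i ≥ 2` with positive multiplicity -/
def JordbpS (f : ℕ → ℕ) : Set ℕ := {i | Even i ∧ 2 ≤ i ∧ 1 ≤ mult f i}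

/-- `Jord_bp` for orthogonal partitions: odd `i ≥ 1` with positive multiplicity -/
def JordbpO (f : ℕ → ℕ) : Set ℕ := {i | Odd i ∧ 1 ≤ mult f i}

/-- the set `{i_1 > … > i_m}` of terms with odd multiplicity -/
def OddSet (f : ℕ → ℕ) : Set ℕ := {i | Odd (mult f i)}

/-- for special symplectic partitions: `{i_1 > … > i_{m'}}`, with `0` added if `m` is odd -/
def Dsymp (f : ℕ → ℕ) : Set ℕ :=
  {i | Odd (mult f i) ∨ (i = 0 ∧ Odd (OddSet f).ncard)}

/-- `a = i_{2h-1}` and `b = i_{2h}` for some `h`: consecutive elements of `Dsymp f`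
with an even number of elements of `Dsymp f` above `a`. -/
def PairedS (f : ℕ → ℕ) (a b : ℕ) : Prop :=
  b < a ∧ a ∈ Dsymp f ∧ b ∈ Dsymp f ∧ Even ((Dsymp f ∩ Set.Ioi a).ncard) ∧
    Dsymp f ∩ Set.Ioo b a = ∅

/-- intervals of a special symplectic partition of `2n` -/
def IsIntervalS (f : ℕ → ℕ) (Δ : Set ℕ) : Prop :=
  (∃ a b, PairedS f a b ∧ Δ = {i | (i = 0 ∨ 1 ≤ mult f i) ∧ b ≤ i ∧ i ≤ a}) ∨
  (∃ i, Even i ∧ (i = 0 ∨ (2 ≤ i ∧ 1 ≤ mult f i)) ∧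
    (¬ ∃ a b, PairedS f a b ∧ b ≤ i ∧ i ≤ a) ∧ Δ = {i})

/-- `a = i_{2h-1}` and `b = i_{2h}` for some `h` (orthogonal partitions of `2n`) -/
def PairedOE (f : ℕ → ℕ) (a b : ℕ) : Prop :=
  b < a ∧ a ∈ OddSet f ∧ b ∈ OddSet f ∧ Even ((OddSet f ∩ Set.Ioi a).ncard) ∧
    OddSet f ∩ Set.Ioo b a = ∅

/-- intervals of a special orthogonal partition of `2n` -/
def IsIntervalOE (f : ℕ → ℕ) (Δ : Set ℕ) : Prop :=
  (∃ a b, PairedOE f a b ∧ Δ = {i | 1 ≤ mult f i ∧ b ≤ i ∧ i ≤ a}) ∨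
  (∃ i, Odd i ∧ 1 ≤ mult f i ∧ (¬ ∃ a b, PairedOE f a b ∧ b ≤ i ∧ i ≤ a) ∧ Δ = {i})

/-- `a = i_{2h}` and `b = i_{2h+1}` for some `h ≥ 1` (orthogonal partitions of `2n+1`) -/
def PairedOO (f : ℕ → ℕ) (a b : ℕ) : Prop :=
  b < a ∧ a ∈ OddSet f ∧ b ∈ OddSet f ∧ Odd ((OddSet f ∩ Set.Ioi a).ncard) ∧
    OddSet f ∩ Set.Ioo b a = ∅

/-- intervals of a special orthogonal partition of `2n+1` (convention `i_0 = ∞`) -/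
def IsIntervalOO (f : ℕ → ℕ) (Δ : Set ℕ) : Prop :=
  (∃ b, b ∈ OddSet f ∧ OddSet f ∩ Set.Ioi b = ∅ ∧ Δ = {i | 1 ≤ mult f i ∧ b ≤ i}) ∨
  (∃ a b, PairedOO f a b ∧ Δ = {i | 1 ≤ mult f i ∧ b ≤ i ∧ i ≤ a}) ∨
  (∃ i, Odd i ∧ 1 ≤ mult f i ∧
    (¬ ((∃ b, b ∈ OddSet f ∧ OddSet f ∩ Set.Ioi b = ∅ ∧ b ≤ i) ∨
        (∃ a b, PairedOO f a b ∧ b ≤ i ∧ i ≤ a))) ∧ Δ = {i})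

/-- `J(Δ) = {j ≥ 1 : λ_j ∈ Δ}` -/
def Jset (f : ℕ → ℕ) (Δ : Set ℕ) : Set ℕ := {j | 1 ≤ j ∧ f j ∈ Δ}

/-- `ζ(λ)` for a special symplectic partition (`j_max(Δ_min) = ∞`, so the smallest
interval contributes no `-1`: its `J`-set has no greatest element). -/
noncomputable def zetaS (f : ℕ → ℕ) : ℕ → ℤ := fun j =>
  if ∃ Δ, IsIntervalS f Δ ∧ IsLeast (Jset f Δ) j then 1
  else if ∃ Δ, IsIntervalS f Δ ∧ IsGreatest (Jset f Δ) j then -1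
  else 0

/-- `ζ(λ)` for a special orthogonal partition of `2n` -/
noncomputable def zetaOE (f : ℕ → ℕ) : ℕ → ℤ := fun j =>
  if ∃ Δ, IsIntervalOE f Δ ∧ IsLeast (Jset f Δ) j then 1
  else if ∃ Δ, IsIntervalOE f Δ ∧ IsGreatest (Jset f Δ) j then -1
  else 0

/-- `J^+` for `λ1` special symplectic and `λ2` special orthogonal (of `2n2`) -/
def JplusSet (f1 f2 : ℕ → ℕ) : Set ℕ :=
  {j | 1 ≤ j ∧ Even (f1 j) ∧ Odd (f2 j) ∧
    ((∃ Δ, IsIntervalS f1 Δ ∧ IsLeast (Jset f1 Δ) j) ∨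
     (∃ Δ, IsIntervalOE f2 Δ ∧ IsLeast (Jset f2 Δ) j))}

/-- `J^-` -/
def JminusSet (f1 f2 : ℕ → ℕ) : Set ℕ :=
  {j | 1 ≤ j ∧ Even (f1 j) ∧ Odd (f2 j) ∧
    ((∃ Δ, IsIntervalS f1 Δ ∧ IsGreatest (Jset f1 Δ) j) ∨
     (∃ Δ, IsIntervalOE f2 Δ ∧ IsGreatest (Jset f2 Δ) j))}

/-- the sequence `ξ` -/
noncomputable def xi (f1 f2 : ℕ → ℕ) : ℕ → ℤ := fun j =>
  if j ∈ JplusSet f1 f2 then 1 else if j ∈ JminusSet f1 f2 then -1 else 0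

/-- partial sums of an integer-valued sequence indexed from 1 -/
def Sz (f : ℕ → ℤ) (k : ℕ) : ℤ := ∑ j ∈ Finset.Icc 1 k, f j

/-- `g` is the greatest orthogonal partition of `N` which is dominated by the
sequence `t` (used to define the Spaltenstein-type duality `d`). -/
def IsDualOf (g : ℕ → ℕ) (N : ℕ) (t : ℕ → ℕ) : Prop :=
  (IsPartition g N ∧ Orth g ∧ Dom g t) ∧
  ∀ ν, IsPartition ν N → Orth ν → Dom ν t → Dom ν g

/-- `g = d(f)` for `f` a symplectic partition of `2m`: the greatest orthogonal
partition of `2m+1` dominated by `^t(f ∪ (1))`. -/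
def IsSympDual (g : ℕ → ℕ) (m : ℕ) (f : ℕ → ℕ) : Prop :=
  IsDualOf g (2*m+1) (transpose (unionP f one1))

/-- `g = d(f)` for `f` an orthogonal partition of `2m`: the greatest orthogonal
partition of `2m` dominated by `^tf`. -/
def IsOrthDual (g : ℕ → ℕ) (m : ℕ) (f : ℕ → ℕ) : Prop :=
  IsDualOf g (2*m) (transpose f)

/-!
Write `c(v)` for the number of parts `≥ v` of odd multiplicity; then `ᵗλ_v ≡ c(v) (mod 2)`.
An interval `Δ` with extreme parts `a ≥ b` is exactly a range where `c` is even at `a + 1` and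
at `b` and odd in between. Hence `J(Δ)` is a block of indices `[s, e] = [ᵗλ_{a+1} + 1, ᵗλ_b]`
with `s` odd and `e` even, distinct intervals give disjoint blocks, and speciality forces all
parts in a block to be odd. The partial sums of `ζ(λ)` are therefore the indicator of
`s ≤ r < e`, so `λ + ζ(λ)` is a partition dominating `λ` whose parts `2t, 2t + 1` have equal
parity, i.e. its transpose is orthogonal. For maximality, `μ ≤ ᵗλ` gives `λ ≤ ᵗμ`, and it
remains to see `S_r(λ) < S_r(ᵗμ)` inside a block: orthogonality of `μ` makes the parts
`2t, 2t + 1` of `ᵗμ` have equal parity, and this clashes with equality of the partial sums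
at `r` given the parities of the parts of `λ` around `r`.
-/

open Finset

structure IsDiagram (f : ℕ → ℕ) (m : ℕ) : Prop where
  anti : ∀ ⦃j k : ℕ⦄, 1 ≤ j → j ≤ k → f k ≤ f j
  eq_zero : ∀ j, m < j → f j = 0

namespace IsDiagram

variable {f : ℕ → ℕ} {m : ℕ}

lemma mono_bound (h : IsDiagram f m) {m' : ℕ} (hm : m ≤ m') : IsDiagram f m' :=
  ⟨h.anti, fun j hj => h.eq_zero j (by omega)⟩

lemma le_of_one_le (h : IsDiagram f m) {j : ℕ} (hj : 1 ≤ f j) : j ≤ m := by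
  by_contra hc
  rw [h.eq_zero j (by omega)] at hj
  omega

end IsDiagram

lemma IsPartition.exists_diagram {f : ℕ → ℕ} {N : ℕ} (h : IsPartition f N) :
    ∃ m, IsDiagram f m ∧ S f m = N := by
  obtain ⟨m, hm⟩ := h.fin
  exact ⟨m, ⟨h.mono, hm⟩, h.total m hm⟩

lemma S_succ (f : ℕ → ℕ) (k : ℕ) : S f (k + 1) = S f k + f (k + 1) :=
  sum_Icc_succ_top (by omega) f

lemma S_eq_sum_Ioc (f : ℕ → ℕ) (k : ℕ) : S f k = ∑ j ∈ Ioc 0 k, f j := rfl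

lemma S_add_sum_Ioc (f : ℕ → ℕ) {a b : ℕ} (hab : a ≤ b) :
    S f a + ∑ j ∈ Ioc a b, f j = S f b := by
  rw [S_eq_sum_Ioc, S_eq_sum_Ioc, sum_Ioc_consecutive f (Nat.zero_le a) hab]

lemma S_eq_of_le {f : ℕ → ℕ} {a b : ℕ} (hab : a ≤ b) (h0 : ∀ j, a < j → f j = 0) :
    S f b = S f a := by
  rw [← S_add_sum_Ioc f hab, sum_eq_zero fun j hj => h0 j (mem_Ioc.mp hj).1, add_zero]

lemma S_congr {x y : ℕ → ℕ} (hxy : ∀ j, 1 ≤ j → x j = y j) (k : ℕ) : S x k = S y k :=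
  sum_congr rfl fun j hj => hxy j (mem_Icc.mp hj).1

lemma IsDiagram.isPartition {f : ℕ → ℕ} {m : ℕ} (h : IsDiagram f m) :
    IsPartition f (S f m) :=
  ⟨h.anti, ⟨m, h.eq_zero⟩, fun m' hm' => by
    rw [← S_eq_of_le (le_max_left m' m) hm', S_eq_of_le (le_max_right m' m) h.eq_zero]⟩

section Transpose

variable {x : ℕ → ℕ} {m : ℕ}

lemma transpose_eq_card (h : IsDiagram x m) {j : ℕ} (hj : 1 ≤ j) :
    transpose x j = #{i ∈ Icc 1 m | j ≤ x i} := by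
  rw [transpose, ← Set.ncard_coe_finset]
  congr 1
  ext i
  simp only [Set.mem_ofPred_eq, coe_filter, mem_Icc]
  exact ⟨fun ⟨h1, _, h3⟩ => ⟨⟨h1, h.le_of_one_le (by omega)⟩, h3⟩,
    fun ⟨⟨h1, _⟩, h3⟩ => ⟨h1, hj, h3⟩⟩

lemma transpose_le (h : IsDiagram x m) {j : ℕ} (hj : 1 ≤ j) : transpose x j ≤ m := by
  rw [transpose_eq_card h hj]
  exact (card_filter_le _ _).trans (by simp)

lemma le_transpose_iff (h : IsDiagram x m) {i j : ℕ} (hi : 1 ≤ i) (hj : 1 ≤ j) :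
    i ≤ transpose x j ↔ j ≤ x i := by
  rw [transpose_eq_card h hj]
  constructor
  · intro hc
    by_contra hlt
    have hsub : {r ∈ Icc 1 m | j ≤ x r} ⊆ Icc 1 (i - 1) := fun r hr => by
      simp only [mem_filter, mem_Icc] at hr ⊢
      by_contra
      have := h.anti hi (by omega : i ≤ r)
      omega
    have := card_le_card hsub
    simp only [Nat.card_Icc] at this
    omega
  · intro hxi
    have hsub : Icc 1 i ⊆ {r ∈ Icc 1 m | j ≤ x r} := fun r hr => by
      simp only [mem_filter, mem_Icc] at hr ⊢
      have := h.anti hr.1 hr.2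
      exact ⟨⟨hr.1, h.le_of_one_le (by omega)⟩, by omega⟩
    simpa using card_le_card hsub

lemma transpose_eq_of_le_of_lt (h : IsDiagram x m) {r v : ℕ} (hr : 1 ≤ r) (hv : 1 ≤ v)
    (hle : v ≤ x r) (hlt : x (r + 1) < v) : transpose x v = r := by
  have h1 := (le_transpose_iff h hr hv).mpr hle
  have h2 := (le_transpose_iff h (by omega : 1 ≤ r + 1) hv).not.mpr (by omega)
  omega

lemma IsDiagram.transpose (h : IsDiagram x m) : IsDiagram (transpose x) (x 1) := by
  refine ⟨fun j k hj hjk => ?_, fun j hj => ?_⟩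
  · rw [transpose_eq_card h hj, transpose_eq_card h (hj.trans hjk)]
    exact card_le_card (monotone_filter_right _ fun i _ hi => hjk.trans hi)
  · rw [transpose_eq_card h (by omega), card_eq_zero, filter_eq_empty_iff]
    intro i hi
    have := h.anti le_rfl (mem_Icc.mp hi).1
    omega

lemma transpose_transpose (h : IsDiagram x m) {i : ℕ} (hi : 1 ≤ i) :
    transpose (transpose x) i = x i := by
  rw [transpose_eq_card h.transpose hi]
  have hxi : x i ≤ x 1 := h.anti le_rfl hi
  have hset : {j ∈ Icc 1 (x 1) | i ≤ transpose x j} = Icc 1 (x i) := by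
    ext j
    simp only [mem_filter, mem_Icc]
    constructor
    · rintro ⟨⟨hj1, _⟩, hj2⟩
      exact ⟨hj1, (le_transpose_iff h hi hj1).mp hj2⟩
    · rintro ⟨hj1, hj2⟩
      exact ⟨⟨hj1, hj2.trans hxi⟩, (le_transpose_iff h hi hj1).mpr hj2⟩
  simp [hset]

lemma mult_eq_card (h : IsDiagram x m) {i : ℕ} (hi : 1 ≤ i) :
    mult x i = #{j ∈ Icc 1 m | x j = i} := by
  rw [mult, ← Set.ncard_coe_finset]
  congr 1
  ext j
  simp only [Set.mem_ofPred_eq, coe_filter, mem_Icc]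
  exact ⟨fun ⟨h1, h2⟩ => ⟨⟨h1, h.le_of_one_le (by omega)⟩, h2⟩, fun ⟨⟨h1, _⟩, h2⟩ => ⟨h1, h2⟩⟩

lemma mult_eq_transpose_sub (h : IsDiagram x m) {v : ℕ} (hv : 1 ≤ v) :
    mult x v = transpose x v - transpose x (v + 1) := by
  rw [mult_eq_card h hv, transpose_eq_card h hv, transpose_eq_card h (by omega)]
  have hsub : {i ∈ Icc 1 m | v + 1 ≤ x i} ⊆ {i ∈ Icc 1 m | v ≤ x i} :=
    monotone_filter_right _ fun i _ hi => by omega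
  rw [← card_sdiff_of_subset hsub]
  congr 1
  ext j
  simp only [mem_filter, mem_sdiff, mem_Icc]
  omega

lemma S_transpose (h : IsDiagram x m) (k : ℕ) :
    S (transpose x) k = ∑ i ∈ Icc 1 m, min (x i) k := by
  rw [S, sum_congr rfl fun j hj => transpose_eq_card h (mem_Icc.mp hj).1]
  simp only [card_filter]
  rw [sum_comm]
  refine sum_congr rfl fun i _ => ?_
  rw [← card_filter]
  have : {j ∈ Icc 1 k | j ≤ x i} = Icc 1 (min (x i) k) := by
    ext j
    simp only [mem_filter, mem_Icc]
    omega
  simp [this]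

end Transpose

/-- `S_k(ᵗy) = ∑ min (y_i, k) ≤ r k + ∑_{i > r} y_i` for every `r`, with equality at
`r = ᵗy_{k+1}`: this is why transposition reverses dominance. -/
lemma sum_min_add_S_le (y : ℕ → ℕ) {r M : ℕ} (hr : r ≤ M) (k : ℕ) :
    ∑ i ∈ Icc 1 M, min (y i) k + S y r ≤ r * k + S y M := by
  rw [← S_add_sum_Ioc y hr, S_eq_sum_Ioc]
  change ∑ i ∈ Ioc 0 M, min (y i) k + _ ≤ _
  rw [← sum_Ioc_consecutive _ (Nat.zero_le r) hr]
  have h1 : ∑ i ∈ Ioc 0 r, min (y i) k ≤ r * k := by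
    simpa using sum_le_sum fun i (_ : i ∈ Ioc 0 r) => min_le_right (y i) k
  have h2 : ∑ i ∈ Ioc r M, min (y i) k ≤ ∑ i ∈ Ioc r M, y i :=
    sum_le_sum fun i _ => min_le_left _ _
  omega

lemma sum_min_add_S_transpose {x : ℕ → ℕ} {M : ℕ} (h : IsDiagram x M) (k : ℕ) :
    ∑ i ∈ Icc 1 M, min (x i) k + S x (transpose x (k + 1)) =
      transpose x (k + 1) * k + S x M := by
  set r := transpose x (k + 1)
  have hrM : r ≤ M := transpose_le h (Nat.le_add_left 1 k)
  have hmem : ∀ i, 1 ≤ i → (i ≤ r ↔ k + 1 ≤ x i) := fun i hi =>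
    le_transpose_iff h hi (by omega)
  rw [← S_add_sum_Ioc x hrM]
  change ∑ i ∈ Ioc 0 M, min (x i) k + _ = _
  rw [← sum_Ioc_consecutive _ (Nat.zero_le r) hrM, S_eq_sum_Ioc]
  have h1 : ∑ i ∈ Ioc 0 r, min (x i) k = r * k := by
    rw [sum_congr rfl fun i hi => min_eq_right (by
      have := (hmem i (mem_Ioc.mp hi).1).mp (mem_Ioc.mp hi).2
      omega)]
    simp
  have h2 : ∑ i ∈ Ioc r M, min (x i) k = ∑ i ∈ Ioc r M, x i :=
    sum_congr rfl fun i hi => min_eq_left (by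
      have hi' := mem_Ioc.mp hi
      have := (hmem i (by omega)).not.mp (by omega)
      omega)
  omega

lemma transpose_isPartition {x : ℕ → ℕ} {N : ℕ} (hx : IsPartition x N) :
    IsPartition (transpose x) N := by
  obtain ⟨m, h, rfl⟩ := hx.exists_diagram
  convert h.transpose.isPartition using 1
  rw [S_transpose h]
  exact sum_congr rfl fun i hi => (min_eq_left (h.anti le_rfl (mem_Icc.mp hi).1)).symm

lemma Dom.transpose_antitone {x y : ℕ → ℕ} {N : ℕ} (hx : IsPartition x N)
    (hy : IsPartition y N) (hdom : Dom x y) : Dom (transpose y) (transpose x) := by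
  obtain ⟨mx, hx, hxN⟩ := hx.exists_diagram
  obtain ⟨my, hy, hyN⟩ := hy.exists_diagram
  have hxM := hx.mono_bound (le_max_left mx my)
  have hyM := hy.mono_bound (le_max_right mx my)
  have hNM : S x (max mx my) = S y (max mx my) := by
    rw [S_eq_of_le (le_max_left mx my) hx.eq_zero, S_eq_of_le (le_max_right mx my) hy.eq_zero,
      hxN, hyN]
  intro k
  rw [S_transpose hxM, S_transpose hyM]
  have hx_eq := sum_min_add_S_transpose hxM k
  have hrM := transpose_le hxM (Nat.le_add_left 1 k)
  have hy_le := sum_min_add_S_le y hrM k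
  have := hdom (transpose x (k + 1))
  omega

section Multiplicity

variable {f : ℕ → ℕ} {m : ℕ}

lemma mult_zero (h : IsDiagram f m) : mult f 0 = 0 :=
  Set.Infinite.ncard <| (Set.Ioi_infinite m).mono fun j (hj : m < j) =>
    ⟨by omega, h.eq_zero j hj⟩

lemma one_le_mult (h : IsDiagram f m) {j : ℕ} (hj : 1 ≤ j) (hfj : 1 ≤ f j) :
    1 ≤ mult f (f j) := by
  rw [mult_eq_card h hfj]
  exact card_pos.mpr ⟨j, by simp [hj, h.le_of_one_le hfj]⟩

lemma exists_eq_of_one_le_mult {i : ℕ} (hi : 1 ≤ mult f i) : ∃ j, 1 ≤ j ∧ f j = i :=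
  Set.nonempty_of_ncard_ne_zero (Nat.one_le_iff_ne_zero.mp hi)

/-- The parts with odd multiplicity; for an orthogonal `f` these are the `i_1 > … > i_m`. -/
noncomputable def oddMults (f : ℕ → ℕ) : Finset ℕ := {i ∈ Icc 1 (f 1) | Odd (mult f i)}

noncomputable def numOddMultGE (f : ℕ → ℕ) (v : ℕ) : ℕ := #{i ∈ oddMults f | v ≤ i}

lemma mem_oddMults (h : IsDiagram f m) {i : ℕ} : i ∈ oddMults f ↔ Odd (mult f i) := by
  refine ⟨fun hi => (mem_filter.mp hi).2, fun hi => mem_filter.mpr ⟨?_, hi⟩⟩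
  have hpos : 1 ≤ mult f i := hi.pos
  have hi1 : 1 ≤ i := by
    by_contra
    rw [show i = 0 by omega, mult_zero h] at hpos
    omega
  obtain ⟨j, hj, rfl⟩ := exists_eq_of_one_le_mult hpos
  exact mem_Icc.mpr ⟨hi1, h.anti le_rfl hj⟩

lemma coe_oddMults (h : IsDiagram f m) : (oddMults f : Set ℕ) = OddSet f := by
  ext i
  exact mem_oddMults h

lemma odd_of_mem_oddMults (horth : Orth f) {i : ℕ} (hi : i ∈ oddMults f) : Odd i := by
  obtain ⟨hi1, hodd⟩ := mem_filter.mp hi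
  by_contra hev
  exact Nat.not_even_iff_odd.mpr hodd (horth i (Nat.not_odd_iff_even.mp hev) (mem_Icc.mp hi1).1)

/-- Counting the indices `j` with `P (f j)` value by value, only the values of odd
multiplicity matter mod 2. -/
lemma even_card_filter_iff (h : IsDiagram f m) (P : ℕ → Prop) [DecidablePred P]
    (hP : ∀ i, P i → 1 ≤ i) :
    Even #{j ∈ Icc 1 m | P (f j)} ↔ Even #{i ∈ oddMults f | P i} := by
  have hmaps : ∀ j ∈ {j ∈ Icc 1 m | P (f j)}, f j ∈ {i ∈ Icc 1 (f 1) | P i} := by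
    intro j hj
    simp only [mem_filter, mem_Icc] at hj ⊢
    exact ⟨⟨hP _ hj.2, h.anti le_rfl hj.1.1⟩, hj.2⟩
  rw [card_eq_sum_card_fiberwise hmaps, even_sum_iff_even_card_odd, oddMults, filter_filter]
  have hfib : ∀ i ∈ {i ∈ Icc 1 (f 1) | P i},
      #{j ∈ {j ∈ Icc 1 m | P (f j)} | f j = i} = mult f i := by
    intro i hi
    simp only [mem_filter, mem_Icc] at hi
    rw [mult_eq_card h hi.1.1, filter_filter]
    congr 1
    exact filter_congr fun j _ => ⟨fun hj => hj.2, fun hj => ⟨hj ▸ hi.2, hj⟩⟩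
  rw [filter_filter]
  exact Iff.of_eq (congrArg _ (congrArg _ (filter_congr fun i hi =>
    and_comm.trans (and_congr_left fun hp => by rw [hfib i (mem_filter.mpr ⟨hi, hp⟩)]))))

lemma even_transpose_iff (h : IsDiagram f m) {v : ℕ} (hv : 1 ≤ v) :
    Even (transpose f v) ↔ Even (numOddMultGE f v) := by
  rw [transpose_eq_card h hv]
  exact even_card_filter_iff h (v ≤ ·) fun i hi => hv.trans hi

lemma even_card_oddMults (h : IsDiagram f m) (horth : Orth f) (heven : Even (S f m)) :
    Even #(oddMults f) := by
  rw [S, even_sum_iff_even_card_odd, even_card_filter_iff h Odd fun i hi => hi.pos] at heven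
  rwa [filter_true_of_mem fun i hi => odd_of_mem_oddMults horth hi] at heven

end Multiplicity

lemma ncard_coe_inter_Ioi (s : Finset ℕ) (a : ℕ) :
    ((s : Set ℕ) ∩ Set.Ioi a).ncard = #{i ∈ s | a < i} := by
  rw [← Set.ncard_coe_finset, coe_filter]
  rfl

lemma exists_gap_of_odd_card_filter {s : Finset ℕ} (hs : Even #s) {v : ℕ}
    (hodd : Odd #{i ∈ s | v ≤ i}) :
    ∃ a ∈ s, ∃ b ∈ s, b < v ∧ v ≤ a ∧ Even #{i ∈ s | a < i} ∧ ∀ i ∈ s, b < i → a ≤ i := by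
  set A : Finset ℕ := {i ∈ s | v ≤ i}
  have hA : A.Nonempty := card_pos.mp hodd.pos
  set a := A.min' hA
  obtain ⟨ha, hva⟩ := mem_filter.mp (min'_mem A hA)
  have hmin : ∀ i ∈ s, v ≤ i → a ≤ i := fun i hi hvi => min'_le A i (mem_filter.mpr ⟨hi, hvi⟩)
  have habove : {i ∈ s | a < i} = A.erase a := by
    ext i
    simp only [mem_filter, mem_erase, A]
    exact ⟨fun ⟨hi, hai⟩ => ⟨by omega, hi, by omega⟩,
      fun ⟨hne, hi, hvi⟩ => ⟨hi, lt_of_le_of_ne (hmin i hi hvi) (Ne.symm hne)⟩⟩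
  have hbelow : #{i ∈ s | i < a} + #A = #s := by
    rw [← card_filter_add_card_filter_not (s := s) (fun i => i < a)]
    congr 2
    exact filter_congr fun i hi => ⟨fun hvi => not_lt.mpr (hmin i hi hvi),
      fun hai => hva.trans (not_lt.mp hai)⟩
  obtain ⟨l, hl⟩ := hodd
  have hB : ({i ∈ s | i < a} : Finset ℕ).Nonempty := by
    rw [← card_pos]
    obtain ⟨k, hk⟩ := hs
    omega
  set b := ({i ∈ s | i < a} : Finset ℕ).max' hB
  obtain ⟨hb, hba⟩ := mem_filter.mp (max'_mem _ hB)
  have hmax : ∀ i ∈ s, i < a → i ≤ b := fun i hi hia => le_max' _ i (mem_filter.mpr ⟨hi, hia⟩)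
  refine ⟨a, ha, b, hb, lt_of_not_ge fun hvb => ?_, hva, ?_, fun i hi hbi => ?_⟩
  · have := hmin b hb hvb
    omega
  · rw [habove, card_erase_of_mem (min'_mem A hA)]
    exact ⟨l, by omega⟩
  · by_contra hia
    have := hmax i hi (by omega)
    omega

section Intervals

variable {f : ℕ → ℕ} {m : ℕ}

lemma numOddMultGE_eq_succ_add_one {v : ℕ} (hv : v ∈ oddMults f) :
    numOddMultGE f v = numOddMultGE f (v + 1) + 1 := by
  rw [numOddMultGE, numOddMultGE, ← card_insert_of_notMem (s := {i ∈ oddMults f | v + 1 ≤ i})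
    (a := v) (by simp)]
  congr 1
  ext i
  simp only [mem_filter, mem_insert]
  constructor
  · rintro ⟨hi, hvi⟩
    rcases Nat.eq_or_lt_of_le hvi with rfl | hlt
    · exact Or.inl rfl
    · exact Or.inr ⟨hi, hlt⟩
  · rintro (rfl | ⟨hi, hvi⟩)
    · exact ⟨hv, le_rfl⟩
    · exact ⟨hi, by omega⟩

lemma numOddMultGE_eq_of_notMem {v w : ℕ} (hvw : v ≤ w)
    (hnone : ∀ i ∈ oddMults f, v ≤ i → w ≤ i) : numOddMultGE f v = numOddMultGE f w :=
  congrArg card (filter_congr fun i hi => ⟨hnone i hi, fun hwi => hvw.trans hwi⟩)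

/-- An odd number of odd-multiplicity parts `≥ v` means that `v` is cut by one of the pairs
`(i_{2h-1}, i_{2h})`. -/
lemma exists_pairedOE_of_odd (h : IsDiagram f m) (heven : Even #(oddMults f)) {v : ℕ}
    (hodd : Odd (numOddMultGE f v)) : ∃ a b, PairedOE f a b ∧ b < v ∧ v ≤ a := by
  obtain ⟨a, ha, b, hb, hbv, hva, habove, hgap⟩ := exists_gap_of_odd_card_filter heven hodd
  refine ⟨a, b, ⟨hbv.trans_le hva, ?_, ?_, ?_, ?_⟩, hbv, hva⟩ <;> rw [← coe_oddMults h]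
  · exact ha
  · exact hb
  · rwa [ncard_coe_inter_Ioi]
  · exact Set.eq_empty_iff_forall_notMem.mpr fun i ⟨hi, hbi, hia⟩ =>
      absurd (hgap i hi hbi) (not_le.mpr hia)

structure IsEvenOrth (f : ℕ → ℕ) (m : ℕ) : Prop where
  diagram : IsDiagram f m
  orth : Orth f
  even : Even (S f m)

structure IntervalBounds (f : ℕ → ℕ) (Δ : Set ℕ) (a b : ℕ) : Prop where
  mem_iff : ∀ x, x ∈ Δ ↔ 1 ≤ mult f x ∧ b ≤ x ∧ x ≤ a
  top_mem : a ∈ Δ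
  odd_bot : Odd b
  even_above : Even (numOddMultGE f (a + 1))
  odd_between : ∀ v, b < v → v ≤ a → Odd (numOddMultGE f v)
  even_bot : Even (numOddMultGE f b)

lemma PairedOE.intervalBounds (h : IsDiagram f m) (horth : Orth f) {a b : ℕ}
    (hp : PairedOE f a b) : IntervalBounds f {i | 1 ≤ mult f i ∧ b ≤ i ∧ i ≤ a} a b := by
  obtain ⟨hba, ha, hb, hev, hgap⟩ := hp
  rw [← coe_oddMults h, mem_coe] at ha hb
  rw [← coe_oddMults h, ncard_coe_inter_Ioi] at hev
  rw [← coe_oddMults h] at hgap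
  have hmid : ∀ v, b < v → v ≤ a → numOddMultGE f v = numOddMultGE f (a + 1) + 1 :=
    fun v hbv hva => by
      rw [← numOddMultGE_eq_succ_add_one ha]
      refine numOddMultGE_eq_of_notMem hva fun i hi hvi => not_lt.mp fun hia =>
        (Set.eq_empty_iff_forall_notMem.mp hgap) i ⟨hi, by omega, hia⟩
  have habove : Even (numOddMultGE f (a + 1)) := hev
  refine ⟨fun x => Iff.rfl, ⟨((mem_oddMults h).mp ha).pos, hba.le, le_rfl⟩,
    odd_of_mem_oddMults horth hb, habove, fun v hbv hva => ?_, ?_⟩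
  · rw [hmid v hbv hva]
    exact habove.add_one
  · rw [numOddMultGE_eq_succ_add_one hb, hmid (b + 1) (by omega) hba]
    exact habove.add_one.add_one

lemma intervalBounds_singleton (h : IsDiagram f m) (heven : Even #(oddMults f)) {i : ℕ}
    (hi : Odd i) (hmult : 1 ≤ mult f i) (hncov : ¬ ∃ a b, PairedOE f a b ∧ b ≤ i ∧ i ≤ a) :
    IntervalBounds f {i} i i := by
  have hcov : ∀ v, i ≤ v → v ≤ i + 1 → Even (numOddMultGE f v) := fun v hiv hvi => by
    by_contra hodd
    obtain ⟨a, b, hp, hbv, hva⟩ := exists_pairedOE_of_odd h heven (Nat.not_even_iff_odd.mp hodd)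
    exact hncov ⟨a, b, hp, by omega, by omega⟩
  refine ⟨fun x => ?_, rfl, hi, hcov _ (by omega) le_rfl, fun v h1 h2 => by omega,
    hcov _ le_rfl (by omega)⟩
  simp only [Set.mem_singleton_iff]
  constructor
  · rintro rfl
    exact ⟨hmult, le_rfl, le_rfl⟩
  · rintro ⟨-, h1, h2⟩
    omega

lemma IsIntervalOE.exists_bounds (hf : IsEvenOrth f m) {Δ : Set ℕ} (hΔ : IsIntervalOE f Δ) :
    ∃ a b, IntervalBounds f Δ a b := by
  rcases hΔ with ⟨a, b, hp, rfl⟩ | ⟨i, hi, hmult, hncov, rfl⟩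
  · exact ⟨a, b, hp.intervalBounds hf.diagram hf.orth⟩
  · exact ⟨i, i, intervalBounds_singleton hf.diagram
      (even_card_oddMults hf.diagram hf.orth hf.even) hi hmult hncov⟩

namespace IntervalBounds

variable {Δ Δ' : Set ℕ} {a b a' b' x : ℕ}

lemma top_le (hB : IntervalBounds f Δ a b) (hB' : IntervalBounds f Δ' a' b') (hx : x ∈ Δ)
    (hx' : x ∈ Δ') : a ≤ a' := by
  by_contra hlt
  obtain ⟨-, -, hxa'⟩ := (hB'.mem_iff x).mp hx'
  obtain ⟨-, hbx, -⟩ := (hB.mem_iff x).mp hx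
  exact Nat.not_even_iff_odd.mpr (hB.odd_between (a' + 1) (by omega) (by omega)) hB'.even_above

lemma bot_le (hB : IntervalBounds f Δ a b) (hB' : IntervalBounds f Δ' a' b') (hx : x ∈ Δ)
    (hx' : x ∈ Δ') : b' ≤ b := by
  by_contra hlt
  obtain ⟨-, hbx', -⟩ := (hB'.mem_iff x).mp hx'
  obtain ⟨-, -, hxa⟩ := (hB.mem_iff x).mp hx
  exact Nat.not_even_iff_odd.mpr (hB.odd_between b' (by omega) (by omega)) hB'.even_bot

lemma eq_of_mem (hB : IntervalBounds f Δ a b) (hB' : IntervalBounds f Δ' a' b') (hx : x ∈ Δ)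
    (hx' : x ∈ Δ') : Δ = Δ' := by
  have ha := le_antisymm (hB.top_le hB' hx hx') (hB'.top_le hB hx' hx)
  have hb := le_antisymm (hB'.bot_le hB hx' hx) (hB.bot_le hB' hx hx')
  ext y
  rw [hB.mem_iff, hB'.mem_iff, ha, hb]

end IntervalBounds

end Intervals

section Special

variable {f : ℕ → ℕ} {m : ℕ}

lemma even_S_of_even (hspec : SpecialPairs f) {k : ℕ} (hk : Even k) : Even (S f k) := by
  obtain ⟨t, rfl⟩ := hk
  induction t with
  | zero => simp [S]
  | succ t ih =>
    have hp := hspec (t + 1) (by omega)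
    rw [show 2 * (t + 1) - 1 = t + t + 1 by omega, show 2 * (t + 1) = t + t + 1 + 1 by omega] at hp
    rw [show t + 1 + (t + 1) = t + t + 1 + 1 by omega, S_succ, S_succ]
    simp only [Nat.even_iff] at *
    omega

/-- Even parts have even multiplicity, so among the parts `≥ v` only the odd ones matter
mod 2. -/
lemma even_S_transpose_iff (h : IsDiagram f m) (horth : Orth f) {v : ℕ} (hv : 1 ≤ v) :
    Even (S f (transpose f v)) ↔ Even (transpose f v) := by
  set p := transpose f v
  have hseg : ∀ j, j ∈ Icc 1 p ↔ j ∈ Icc 1 m ∧ v ≤ f j := fun j => by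
    simp only [mem_Icc]
    constructor
    · rintro ⟨hj, hjp⟩
      have := (le_transpose_iff h hj hv).mp hjp
      exact ⟨⟨hj, h.le_of_one_le (by omega)⟩, this⟩
    · rintro ⟨⟨hj, -⟩, hvj⟩
      exact ⟨hj, (le_transpose_iff h hj hv).mpr hvj⟩
  have hevens : Even #{j ∈ Icc 1 p | ¬ Odd (f j)} := by
    have : {j ∈ Icc 1 p | ¬ Odd (f j)} = {j ∈ Icc 1 m | v ≤ f j ∧ Even (f j)} := by
      ext j
      simp only [mem_filter, hseg, Nat.not_odd_iff_even, and_assoc]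
    rw [this, even_card_filter_iff h (fun i => v ≤ i ∧ Even i) fun i hi => hv.trans hi.1,
      filter_false_of_mem fun i hi hev => Nat.not_even_iff_odd.mpr
        (odd_of_mem_oddMults horth hi) hev.2]
    simp
  have hp : p = #{j ∈ Icc 1 p | Odd (f j)} + #{j ∈ Icc 1 p | ¬ Odd (f j)} := by
    rw [card_filter_add_card_filter_not]
    simp
  rw [S, even_sum_iff_even_card_odd]
  conv_rhs => rw [hp, Nat.even_add]
  exact ⟨fun hodd => iff_of_true hodd hevens, fun hiff => hiff.mpr hevens⟩

/-- The run of the even part `x` ends at `q = ᵗλ_x`; were `q` odd, speciality would make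
`S_q(λ) ≡ λ_q = x` even. -/
lemma even_transpose_of_even (h : IsDiagram f m) (horth : Orth f) (hspec : SpecialPairs f)
    {x : ℕ} (hx : Even x) (hmult : 1 ≤ mult f x) : Even (transpose f x) := by
  obtain ⟨j, hj, rfl⟩ := exists_eq_of_one_le_mult hmult
  have hfj : 1 ≤ f j := by
    by_contra
    rw [show f j = 0 by omega, mult_zero h] at hmult
    omega
  set q := transpose f (f j)
  have hjq : j ≤ q := (le_transpose_iff h hj hfj).mpr le_rfl
  have hfq : f q = f j := le_antisymm (h.anti hj hjq) ((le_transpose_iff h (hj.trans hjq) hfj).mp le_rfl)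
  by_contra hodd
  obtain ⟨u, hu⟩ := Nat.not_even_iff_odd.mp hodd
  have hS : Even (S f q) := by
    rw [hu, S_succ, ← hu, hfq]
    exact (even_S_of_even hspec (even_two_mul u)).add hx
  exact hodd ((even_S_transpose_iff h horth hfj).mp hS)

lemma IntervalBounds.odd_of_mem (h : IsDiagram f m) (horth : Orth f) (hspec : SpecialPairs f)
    {Δ : Set ℕ} {a b x : ℕ} (hB : IntervalBounds f Δ a b) (hx : x ∈ Δ) : Odd x := by
  obtain ⟨hmult, hbx, hxa⟩ := (hB.mem_iff x).mp hx
  by_contra hev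
  rw [Nat.not_odd_iff_even] at hev
  have hbx' : b < x := lt_of_le_of_ne hbx fun hbx => by
    rw [hbx] at hB
    exact Nat.not_even_iff_odd.mpr hB.odd_bot hev
  have := (even_transpose_iff h (by omega)).mp (even_transpose_of_even h horth hspec hev hmult)
  exact Nat.not_even_iff_odd.mpr (hB.odd_between x hbx' hxa) this

end Special

section Blocks

variable {f : ℕ → ℕ} {m : ℕ}

namespace IntervalBounds

variable {Δ : Set ℕ} {a b : ℕ}

lemma one_le_bot (hB : IntervalBounds f Δ a b) : 1 ≤ b := hB.odd_bot.pos

lemma jset_eq (h : IsDiagram f m) (hB : IntervalBounds f Δ a b) :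
    Jset f Δ = Set.Ioc (transpose f (a + 1)) (transpose f b) := by
  ext j
  simp only [Jset, Set.mem_ofPred_eq, Set.mem_Ioc, hB.mem_iff]
  have hb := hB.one_le_bot
  constructor
  · rintro ⟨hj, -, hbj, hja⟩
    exact ⟨lt_of_not_ge fun hle => by have := (le_transpose_iff h hj (by omega)).mp hle; omega,
      (le_transpose_iff h hj hb).mpr hbj⟩
  · rintro ⟨hlt, hle⟩
    have hj : 1 ≤ j := by omega
    have hbj := (le_transpose_iff h hj hb).mp hle
    have hja := (le_transpose_iff h hj (by omega : 1 ≤ a + 1)).not.mp (by omega)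
    exact ⟨hj, one_le_mult h hj (by omega), hbj, by omega⟩

lemma transpose_lt (h : IsDiagram f m) (hB : IntervalBounds f Δ a b) :
    transpose f (a + 1) < transpose f b := by
  obtain ⟨j, hj, hja⟩ := exists_eq_of_one_le_mult ((hB.mem_iff a).mp hB.top_mem).1
  have : j ∈ Jset f Δ := ⟨hj, hja ▸ hB.top_mem⟩
  rw [hB.jset_eq h] at this
  exact this.1.trans_le this.2

lemma isLeast_jset (h : IsDiagram f m) (hB : IntervalBounds f Δ a b) :
    IsLeast (Jset f Δ) (transpose f (a + 1) + 1) := by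
  rw [hB.jset_eq h]
  exact ⟨⟨by omega, hB.transpose_lt h⟩, fun j hj => hj.1⟩

lemma isGreatest_jset (h : IsDiagram f m) (hB : IntervalBounds f Δ a b) :
    IsGreatest (Jset f Δ) (transpose f b) := by
  rw [hB.jset_eq h]
  exact ⟨⟨hB.transpose_lt h, le_rfl⟩, fun j hj => hj.2⟩

/-- `r = ᵗλ_v` for `v = λ_{r+1} + 1`, and `c(v)` is odd for `b < v ≤ a`. -/
lemma odd_of_lt (h : IsDiagram f m) (hB : IntervalBounds f Δ a b) {r : ℕ}
    (hr : r + 1 ∈ Jset f Δ) (hr' : r ∈ Jset f Δ) (hlt : f (r + 1) < f r) : Odd r := by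
  obtain ⟨hr1, har⟩ := hr'
  obtain ⟨-, hb, -⟩ := (hB.mem_iff _).mp hr.2
  obtain ⟨-, -, ha⟩ := (hB.mem_iff _).mp har
  have hT : transpose f (f (r + 1) + 1) = r :=
    transpose_eq_of_le_of_lt h hr1 (by omega) (by omega) (by omega)
  have hodd := hB.odd_between (f (r + 1) + 1) (by omega) (by omega)
  rw [← Nat.not_even_iff_odd, ← even_transpose_iff h (by omega), hT] at hodd
  exact Nat.not_even_iff_odd.mp hodd

end IntervalBounds

/-- `[s, e]` is `J(Δ)` for an interval `Δ`: `ζ(λ)` is `1` at `s`, `-1` at `e`. -/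
def IsBlock (f : ℕ → ℕ) (s e : ℕ) : Prop :=
  ∃ Δ, IsIntervalOE f Δ ∧ IsLeast (Jset f Δ) s ∧ IsGreatest (Jset f Δ) e

namespace IsBlock

variable {s e : ℕ}

lemma exists_bounds (hf : IsEvenOrth f m) (hblk : IsBlock f s e) :
    ∃ Δ a b, IntervalBounds f Δ a b ∧ Jset f Δ = Set.Icc s e ∧
      s = transpose f (a + 1) + 1 ∧ e = transpose f b := by
  obtain ⟨Δ, hΔ, hs, he⟩ := hblk
  obtain ⟨a, b, hB⟩ := hΔ.exists_bounds hf
  have hs' := hs.unique (hB.isLeast_jset hf.diagram)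
  have he' := he.unique (hB.isGreatest_jset hf.diagram)
  refine ⟨Δ, a, b, hB, ?_, hs', he'⟩
  rw [hB.jset_eq hf.diagram, hs', he']
  ext j
  simp only [Set.mem_Ioc, Set.mem_Icc]
  omega

lemma odd_left (hf : IsEvenOrth f m) (hblk : IsBlock f s e) : Odd s := by
  obtain ⟨Δ, a, b, hB, -, rfl, -⟩ := hblk.exists_bounds hf
  exact ((even_transpose_iff hf.diagram (by omega)).mpr hB.even_above).add_one

lemma even_right (hf : IsEvenOrth f m) (hblk : IsBlock f s e) : Even e := by
  obtain ⟨Δ, a, b, hB, -, -, rfl⟩ := hblk.exists_bounds hf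
  exact (even_transpose_iff hf.diagram hB.one_le_bot).mpr hB.even_bot

lemma lt (hf : IsEvenOrth f m) (hblk : IsBlock f s e) : s < e := by
  obtain ⟨Δ, a, b, hB, -, rfl, rfl⟩ := hblk.exists_bounds hf
  have := hB.transpose_lt hf.diagram
  obtain ⟨k, hk⟩ := (even_transpose_iff hf.diagram (by omega)).mpr hB.even_above
  obtain ⟨l, hl⟩ := (even_transpose_iff hf.diagram hB.one_le_bot).mpr hB.even_bot
  omega

lemma right_le (hf : IsEvenOrth f m) (hblk : IsBlock f s e) : e ≤ m := by
  obtain ⟨Δ, a, b, hB, -, -, rfl⟩ := hblk.exists_bounds hf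
  exact transpose_le hf.diagram hB.one_le_bot

lemma odd_apply (hf : IsEvenOrth f m) (hspec : SpecialPairs f) (hblk : IsBlock f s e) {j : ℕ}
    (hsj : s ≤ j) (hje : j ≤ e) : Odd (f j) := by
  obtain ⟨Δ, a, b, hB, hJ, -⟩ := hblk.exists_bounds hf
  have hj : j ∈ Jset f Δ := hJ ▸ ⟨hsj, hje⟩
  exact hB.odd_of_mem hf.diagram hf.orth hspec hj.2

lemma eq_of_mem (hf : IsEvenOrth f m) {s' e' j : ℕ} (hblk : IsBlock f s e)
    (hblk' : IsBlock f s' e') (hsj : s ≤ j) (hje : j ≤ e) (hsj' : s' ≤ j) (hje' : j ≤ e') :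
    s = s' ∧ e = e' := by
  obtain ⟨Δ, a, b, hB, hJ, -⟩ := hblk.exists_bounds hf
  obtain ⟨Δ', a', b', hB', hJ', -⟩ := hblk'.exists_bounds hf
  have hj : j ∈ Jset f Δ := hJ ▸ ⟨hsj, hje⟩
  have hj' : j ∈ Jset f Δ' := hJ' ▸ ⟨hsj', hje'⟩
  rw [hB.eq_of_mem hB' hj.2 hj'.2, hJ'] at hJ
  obtain ⟨hs, he⟩ := (Set.Icc_eq_Icc_iff (hsj'.trans hje')).mp hJ
  exact ⟨hs.symm, he.symm⟩

lemma succ_le_of_eq (hf : IsEvenOrth f m) (hblk : IsBlock f s e) {j : ℕ} (hsj : s ≤ j)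
    (hje : j ≤ e) (heq : f (j + 1) = f j) : j + 1 ≤ e := by
  obtain ⟨Δ, a, b, hB, hJ, -⟩ := hblk.exists_bounds hf
  have hj : j ∈ Jset f Δ := hJ ▸ ⟨hsj, hje⟩
  have hj1 : j + 1 ∈ Jset f Δ := ⟨by omega, heq ▸ hj.2⟩
  rw [hJ] at hj1
  exact hj1.2

lemma odd_of_lt (hf : IsEvenOrth f m) (hblk : IsBlock f s e) {r : ℕ} (hsr : s ≤ r)
    (hre : r < e) (hlt : f (r + 1) < f r) : Odd r := by
  obtain ⟨Δ, a, b, hB, hJ, -⟩ := hblk.exists_bounds hf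
  exact hB.odd_of_lt hf.diagram (hJ ▸ ⟨by omega, hre⟩) (hJ ▸ ⟨hsr, hre.le⟩) hlt

end IsBlock

lemma exists_isBlock_of_odd (hf : IsEvenOrth f m) {j : ℕ} (hj : 1 ≤ j) (hodd : Odd (f j)) :
    ∃ s e, IsBlock f s e ∧ s ≤ j ∧ j ≤ e := by
  have hmult := one_le_mult hf.diagram hj hodd.pos
  obtain ⟨Δ, hΔ, hjΔ⟩ : ∃ Δ, IsIntervalOE f Δ ∧ f j ∈ Δ := by
    by_cases hcov : ∃ a b, PairedOE f a b ∧ b ≤ f j ∧ f j ≤ a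
    · obtain ⟨a, b, hp, hba, hab⟩ := hcov
      exact ⟨_, Or.inl ⟨a, b, hp, rfl⟩, hmult, hba, hab⟩
    · exact ⟨{f j}, Or.inr ⟨f j, hodd, hmult, hcov, rfl⟩, rfl⟩
  obtain ⟨a, b, hB⟩ := hΔ.exists_bounds hf
  have hJ : j ∈ Jset f Δ := ⟨hj, hjΔ⟩
  exact ⟨_, _, ⟨Δ, hΔ, hB.isLeast_jset hf.diagram, hB.isGreatest_jset hf.diagram⟩,
    (hB.isLeast_jset hf.diagram).2 hJ, (hB.isGreatest_jset hf.diagram).2 hJ⟩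

end Blocks

section Zeta

variable {f : ℕ → ℕ} {m : ℕ}

lemma IsBlock.not_isBlock_left (hf : IsEvenOrth f m) {j e s : ℕ} (hb : IsBlock f j e) :
    ¬ IsBlock f s j := fun hb' => by
  have hje := hb.lt hf
  have := (hb.eq_of_mem hf hb' le_rfl hje.le (hb'.lt hf).le le_rfl).2
  omega

lemma zetaOE_eq (hf : IsEvenOrth f m) (j : ℕ) :
    zetaOE f j = (if ∃ e, IsBlock f j e then 1 else 0) - (if ∃ s, IsBlock f s j then 1 else 0) := by
  have hleast : (∃ Δ, IsIntervalOE f Δ ∧ IsLeast (Jset f Δ) j) ↔ ∃ e, IsBlock f j e := by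
    refine ⟨fun ⟨Δ, hΔ, hl⟩ => ?_, fun ⟨e, Δ, hΔ, hl, _⟩ => ⟨Δ, hΔ, hl⟩⟩
    obtain ⟨a, b, hB⟩ := hΔ.exists_bounds hf
    exact ⟨_, Δ, hΔ, hl, hB.isGreatest_jset hf.diagram⟩
  have hgreatest : (∃ Δ, IsIntervalOE f Δ ∧ IsGreatest (Jset f Δ) j) ↔ ∃ s, IsBlock f s j := by
    refine ⟨fun ⟨Δ, hΔ, hg⟩ => ?_, fun ⟨s, Δ, hΔ, _, hg⟩ => ⟨Δ, hΔ, hg⟩⟩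
    obtain ⟨a, b, hB⟩ := hΔ.exists_bounds hf
    exact ⟨_, Δ, hΔ, hB.isLeast_jset hf.diagram, hg⟩
  unfold zetaOE
  rw [hleast, hgreatest]
  split_ifs with h1 h2 <;> try rfl
  obtain ⟨e, hb⟩ := h1
  obtain ⟨s, hb'⟩ := h2
  exact absurd hb' (hb.not_isBlock_left hf)

def OpenAt (f : ℕ → ℕ) (r : ℕ) : Prop := ∃ s e, IsBlock f s e ∧ s ≤ r ∧ r < e

lemma IsBlock.not_openAt_pred (hf : IsEvenOrth f m) {r e : ℕ} (hb : IsBlock f (r + 1) e) :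
    ¬ OpenAt f r := fun ⟨s', e', hb', hs', hr'⟩ => by
  have := (hb.eq_of_mem hf hb' le_rfl (hb.lt hf).le (by omega) (by omega)).1
  omega

lemma IsBlock.not_openAt_right (hf : IsEvenOrth f m) {s e : ℕ} (hb : IsBlock f s e) :
    ¬ OpenAt f e := fun ⟨s', e', hb', hs', hr'⟩ => by
  have := (hb.eq_of_mem hf hb' (hb.lt hf).le le_rfl hs' hr'.le).2
  omega

lemma Sz_zetaOE (hf : IsEvenOrth f m) (r : ℕ) :
    Sz (zetaOE f) r = if OpenAt f r then 1 else 0 := by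
  induction r with
  | zero =>
    rw [if_neg]
    · rfl
    · rintro ⟨s, e, hb, hs, -⟩
      have := (hb.odd_left hf).pos
      omega
  | succ r ih =>
    rw [Sz, sum_Icc_succ_top (by omega), ← Sz, ih, zetaOE_eq hf]
    by_cases hstart : ∃ e, IsBlock f (r + 1) e
    · obtain ⟨e, hb⟩ := hstart
      rw [if_neg (hb.not_openAt_pred hf), if_pos ⟨e, hb⟩, if_neg fun ⟨s, hb'⟩ =>
        hb.not_isBlock_left hf hb', if_pos ⟨r + 1, e, hb, le_rfl, hb.lt hf⟩]
      norm_num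
    by_cases hend : ∃ s, IsBlock f s (r + 1)
    · obtain ⟨s, hb⟩ := hend
      have hopen : OpenAt f r := ⟨s, r + 1, hb, by have := hb.lt hf; omega, by omega⟩
      rw [if_pos hopen, if_neg hstart, if_pos ⟨s, hb⟩, if_neg (hb.not_openAt_right hf)]
      norm_num
    have hiff : OpenAt f r ↔ OpenAt f (r + 1) := by
      constructor
      · rintro ⟨s, e, hb, hs, hr⟩
        refine ⟨s, e, hb, by omega, lt_of_le_of_ne hr fun he => hend ⟨s, ?_⟩⟩
        rwa [he]
      · rintro ⟨s, e, hb, hs, hr⟩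
        refine ⟨s, e, hb, Nat.le_of_lt_succ (lt_of_le_of_ne hs fun hs' => hstart ⟨e, ?_⟩), by omega⟩
        subst hs'
        exact hb
    rw [if_neg hstart, if_neg hend, hiff]
    simp

lemma zetaOE_eq_openAt (hf : IsEvenOrth f m) {j : ℕ} (hj : 1 ≤ j) :
    zetaOE f j = (if OpenAt f j then 1 else 0) - (if OpenAt f (j - 1) then 1 else 0) := by
  have := Sz_zetaOE hf j
  obtain ⟨i, rfl⟩ : ∃ i, j = i + 1 := ⟨j - 1, by omega⟩
  rw [Sz, sum_Icc_succ_top (by omega), ← Sz, Sz_zetaOE hf] at this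
  rw [Nat.add_sub_cancel]
  omega

lemma OpenAt.lt (hf : IsEvenOrth f m) {r : ℕ} (hr : OpenAt f r) : r < m := by
  obtain ⟨s, e, hb, -, hre⟩ := hr
  exact hre.trans_le (hb.right_le hf)

lemma odd_iff_openAt (hf : IsEvenOrth f m) (hspec : SpecialPairs f) {j : ℕ} (hj : 1 ≤ j) :
    Odd (f j) ↔ OpenAt f (j - 1) ∨ OpenAt f j := by
  constructor
  · intro hodd
    obtain ⟨s, e, hb, hsj, hje⟩ := exists_isBlock_of_odd hf hj hodd
    rcases Nat.eq_or_lt_of_le hje with rfl | hlt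
    · exact Or.inl ⟨s, j, hb, by have := hb.lt hf; omega, by omega⟩
    · exact Or.inr ⟨s, e, hb, hsj, hlt⟩
  · rintro (⟨s, e, hb, hs, hr⟩ | ⟨s, e, hb, hs, hr⟩)
    · exact hb.odd_apply hf hspec (by omega) (by omega)
    · exact hb.odd_apply hf hspec hs hr.le

lemma openAt_of_eq (hf : IsEvenOrth f m) {j : ℕ} (hj : 1 ≤ j) (heq : f (j + 1) = f j)
    (hodd : Odd (f j)) : OpenAt f j := by
  obtain ⟨s, e, hb, hsj, hje⟩ := exists_isBlock_of_odd hf hj hodd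
  exact ⟨s, e, hb, hsj, hb.succ_le_of_eq hf hsj hje heq⟩

/-- Blocks start at odd and end at even indices. -/
lemma OpenAt.of_even (hf : IsEvenOrth f m) {t : ℕ} (ht : 1 ≤ t) (hopen : OpenAt f (2 * t)) :
    OpenAt f (2 * t - 1) ∧ OpenAt f (2 * t + 1) := by
  obtain ⟨s, e, hb, hs, he⟩ := hopen
  obtain ⟨k, hk⟩ := hb.odd_left hf
  obtain ⟨l, hl⟩ := hb.even_right hf
  exact ⟨⟨s, e, hb, by omega, by omega⟩, ⟨s, e, hb, by omega, by omega⟩⟩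

lemma even_S_of_odd_iff {L : ℕ → ℕ}
    (hLpairs : ∀ t, 1 ≤ t → L (2 * t) % 2 = L (2 * t + 1) % 2) {k : ℕ} (hk : Odd k) :
    Even (S L k) ↔ Even (L 1) := by
  obtain ⟨t, rfl⟩ := hk
  induction t with
  | zero => simp [S]
  | succ t ih =>
    have hp : L (2 * t + 2) % 2 = L (2 * t + 3) % 2 := hLpairs (t + 1) (by omega)
    have hS : S L (2 * (t + 1) + 1) = S L (2 * t + 1) + L (2 * t + 2) + L (2 * t + 3) := by
      rw [show 2 * (t + 1) + 1 = 2 * t + 1 + 1 + 1 by ring, S_succ, S_succ]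
    rw [hS, ← ih]
    simp only [Nat.even_iff] at *
    omega

lemma even_apply_one_of_pairs {L : ℕ → ℕ} {mL : ℕ} (hL : IsDiagram L mL)
    (hLpairs : ∀ t, 1 ≤ t → L (2 * t) % 2 = L (2 * t + 1) % 2) (heven : Even (S L mL)) :
    Even (L 1) := by
  rwa [← even_S_of_odd_iff hLpairs (odd_two_mul_add_one mL),
    S_eq_of_le (by omega) hL.eq_zero]

lemma OpenAt.lt_S (hf : IsEvenOrth f m) (hspec : SpecialPairs f) {L : ℕ → ℕ} {mL r : ℕ}
    (hL : IsDiagram L mL) (hLpairs : ∀ t, 1 ≤ t → L (2 * t) % 2 = L (2 * t + 1) % 2)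
    (hL1 : Even (L 1)) (hdom : Dom f L) (hopen : OpenAt f r) : S f r < S L r := by
  obtain ⟨s, e, hb, hsr, hre⟩ := hopen
  have hs := (hb.odd_left hf).pos
  by_contra hge
  have heq : S f r = S L r := le_antisymm (hdom r) (not_lt.mp hge)
  have hfr1 := hb.odd_apply hf hspec (by omega : s ≤ r + 1) hre
  rcases Nat.even_or_odd r with hr | hr
  · obtain ⟨k, rfl⟩ : ∃ k, r = k + 1 := ⟨r - 1, by omega⟩
    have hk : Odd k := by simpa [Nat.even_add_one] using hr
    have hSf := even_S_of_even hspec hr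
    have hSL := (even_S_of_odd_iff hLpairs hk).mpr hL1
    have hup := hdom (k + 1 + 1)
    have hdown := hdom k
    have hLanti := hL.anti (by omega : 1 ≤ k + 1) (by omega : k + 1 ≤ k + 1 + 1)
    simp only [S_succ] at hup heq hSf
    rw [Nat.even_iff] at hSf hSL
    rw [Nat.odd_iff] at hfr1
    have hlt : f (k + 1 + 1) < f (k + 1) := by omega
    exact Nat.not_even_iff_odd.mpr (hb.odd_of_lt hf hsr hre hlt) hr
  · obtain ⟨k, rfl⟩ : ∃ k, r = k + 1 := ⟨r - 1, by omega⟩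
    have hk : Even k := by simpa [Nat.odd_add_one] using hr
    have hSf := even_S_of_even hspec hk
    have hSL := (even_S_of_odd_iff hLpairs hr).mpr hL1
    have hfr := hb.odd_apply hf hspec hsr hre.le
    rw [S_succ] at heq
    rw [Nat.even_iff] at hSf hSL
    rw [Nat.odd_iff] at hfr
    omega

end Zeta

section AddZeta

variable {f : ℕ → ℕ} {m : ℕ}

/-- `λ + ζ(λ)`; the truncation `toNat` never bites, see `addZeta_eq`. -/
noncomputable def addZeta (f : ℕ → ℕ) : ℕ → ℕ := fun j => ((f j : ℤ) + zetaOE f j).toNat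

lemma addZeta_eq (hf : IsEvenOrth f m) (hspec : SpecialPairs f) {j : ℕ} (hj : 1 ≤ j) :
    (addZeta f j : ℤ) = f j + zetaOE f j := by
  rw [addZeta, Int.toNat_of_nonneg]
  rw [zetaOE_eq_openAt hf hj]
  by_cases h0 : OpenAt f (j - 1)
  · have := ((odd_iff_openAt hf hspec hj).mpr (Or.inl h0)).pos
    split_ifs <;> omega
  · split_ifs <;> omega

lemma addZeta_eq_zero (hf : IsEvenOrth f m) {j : ℕ} (hj : m < j) : addZeta f j = 0 := by
  have h1 : ¬ OpenAt f j := fun h => by have := h.lt hf; omega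
  have h0 : ¬ OpenAt f (j - 1) := fun h => by have := h.lt hf; omega
  rw [addZeta, zetaOE_eq_openAt hf (by omega), if_neg h1, if_neg h0, hf.diagram.eq_zero j hj]
  rfl

lemma addZeta_succ_le (hf : IsEvenOrth f m) (hspec : SpecialPairs f) {j : ℕ} (hj : 1 ≤ j) :
    addZeta f (j + 1) ≤ addZeta f j := by
  have e1 := addZeta_eq hf hspec hj
  have e2 := addZeta_eq hf hspec (by omega : 1 ≤ j + 1)
  rw [zetaOE_eq_openAt hf hj] at e1
  rw [zetaOE_eq_openAt hf (by omega), Nat.add_sub_cancel] at e2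
  have hanti := hf.diagram.anti hj (by omega : j ≤ j + 1)
  have hodd1 := odd_iff_openAt hf hspec hj
  have hodd2 := odd_iff_openAt hf hspec (by omega : 1 ≤ j + 1)
  rw [Nat.add_sub_cancel] at hodd2
  -- a block closing at `j` and another opening at `j + 1` have distinct odd parts there
  have heq := openAt_of_eq hf hj
  by_cases h0 : OpenAt f (j - 1) <;> by_cases h1 : OpenAt f j <;>
    by_cases h2 : OpenAt f (j + 1) <;>
    simp only [h0, h1, h2, if_true, if_false, or_true, or_false, iff_true, iff_false,
      imp_iff_not_or, Nat.odd_iff] at e1 e2 hodd1 hodd2 heq <;> omega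

lemma isDiagram_addZeta (hf : IsEvenOrth f m) (hspec : SpecialPairs f) :
    IsDiagram (addZeta f) m := by
  refine ⟨fun j k hj hjk => ?_, fun j hj => addZeta_eq_zero hf hj⟩
  induction k, hjk using Nat.le_induction with
  | base => exact le_rfl
  | succ k hk ih => exact (addZeta_succ_le hf hspec (hj.trans hk)).trans ih

lemma S_addZeta (hf : IsEvenOrth f m) (hspec : SpecialPairs f) (r : ℕ) :
    (S (addZeta f) r : ℤ) = S f r + if OpenAt f r then 1 else 0 := by
  rw [← Sz_zetaOE hf, S, S, Sz]
  push_cast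
  rw [← sum_add_distrib]
  exact sum_congr rfl fun j hj => addZeta_eq hf hspec (mem_Icc.mp hj).1

lemma S_addZeta_bound (hf : IsEvenOrth f m) (hspec : SpecialPairs f) :
    S (addZeta f) m = S f m := by
  have := S_addZeta hf hspec m
  rw [if_neg fun h => (h.lt hf).false] at this
  omega

lemma dom_addZeta (hf : IsEvenOrth f m) (hspec : SpecialPairs f) : Dom f (addZeta f) := by
  intro r
  have := S_addZeta hf hspec r
  split_ifs at this <;> omega

lemma addZeta_pairs (hf : IsEvenOrth f m) (hspec : SpecialPairs f) {t : ℕ} (ht : 1 ≤ t) :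
    addZeta f (2 * t) % 2 = addZeta f (2 * t + 1) % 2 := by
  have e1 := addZeta_eq hf hspec (by omega : 1 ≤ 2 * t)
  have e2 := addZeta_eq hf hspec (by omega : 1 ≤ 2 * t + 1)
  rw [zetaOE_eq_openAt hf (by omega)] at e1
  rw [zetaOE_eq_openAt hf (by omega), Nat.add_sub_cancel] at e2
  have hodd1 := odd_iff_openAt hf hspec (by omega : 1 ≤ 2 * t)
  have hodd2 := odd_iff_openAt hf hspec (by omega : 1 ≤ 2 * t + 1)
  rw [Nat.add_sub_cancel] at hodd2
  have hQ := OpenAt.of_even hf ht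
  by_cases h0 : OpenAt f (2 * t - 1) <;> by_cases h1 : OpenAt f (2 * t) <;>
    by_cases h2 : OpenAt f (2 * t + 1) <;>
    simp only [h0, h1, h2, if_true, if_false, or_true, or_false, iff_true, iff_false,
      and_true, and_false, imp_false, not_true, Nat.odd_iff]
      at e1 e2 hodd1 hodd2 hQ <;> omega

lemma dom_addZeta_of_dom (hf : IsEvenOrth f m) (hspec : SpecialPairs f) {L : ℕ → ℕ} {mL : ℕ}
    (hL : IsDiagram L mL) (hLpairs : ∀ t, 1 ≤ t → L (2 * t) % 2 = L (2 * t + 1) % 2)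
    (htot : S f m = S L mL) (hdom : Dom f L) : Dom (addZeta f) L := by
  intro r
  have := S_addZeta hf hspec r
  split_ifs at this with hopen
  · have := hopen.lt_S hf hspec hL hLpairs
      (even_apply_one_of_pairs hL hLpairs (htot ▸ hf.even)) hdom
    omega
  · have := hdom r
    omega

end AddZeta

lemma pairs_transpose_of_orth {μ : ℕ → ℕ} {m : ℕ} (h : IsDiagram μ m) (horth : Orth μ) :
    ∀ t, 1 ≤ t → transpose μ (2 * t) % 2 = transpose μ (2 * t + 1) % 2 := by
  intro t ht
  have hev := horth (2 * t) (even_two_mul t) (by omega)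
  rw [mult_eq_transpose_sub h (by omega), Nat.even_iff] at hev
  have := h.transpose.anti (by omega : 1 ≤ 2 * t) (by omega : 2 * t ≤ 2 * t + 1)
  omega

lemma orth_transpose_of_pairs {g : ℕ → ℕ} {m : ℕ} (h : IsDiagram g m)
    (hpairs : ∀ t, 1 ≤ t → g (2 * t) % 2 = g (2 * t + 1) % 2) : Orth (transpose g) := by
  rintro _ ⟨t, rfl⟩ ht
  rw [mult_eq_transpose_sub h.transpose ht, transpose_transpose h ht,
    transpose_transpose h (by omega), Nat.even_iff, ← two_mul]
  have := hpairs t (by omega)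
  have := h.anti (by omega : 1 ≤ 2 * t) (by omega : 2 * t ≤ 2 * t + 1)
  omega

lemma dom_transpose_of_dom_transpose {x y : ℕ → ℕ} {N : ℕ} (hx : IsPartition x N)
    (hy : IsPartition y N) (hdom : Dom x (transpose y)) : Dom y (transpose x) := by
  obtain ⟨m, hy', -⟩ := hy.exists_diagram
  intro k
  rw [← S_congr (fun j hj => transpose_transpose hy' hj) k]
  exact hdom.transpose_antitone hx (transpose_isPartition hy) k

theorem stmt1_general (n : ℕ) (f : ℕ → ℕ)
    (hpart : IsPartition f (2*n)) (horth : Orth f) (hspec : SpecialPairs f) :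
    ∃ g : ℕ → ℕ,
      (∀ j, 1 ≤ j → (g j : ℤ) = (f j : ℤ) + zetaOE f j) ∧
      IsPartition g (2*n) ∧
      (IsPartition (transpose g) (2*n) ∧ Orth (transpose g) ∧
        Dom (transpose g) (transpose f)) ∧
      (∀ μ : ℕ → ℕ, IsPartition μ (2*n) → Orth μ → Dom μ (transpose f) →
        Dom μ (transpose g)) := by
  obtain ⟨m, hdiag, hfN⟩ := hpart.exists_diagram
  have hf : IsEvenOrth f m := ⟨hdiag, horth, hfN ▸ even_two_mul n⟩
  have hgdiag := isDiagram_addZeta hf hspec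
  have hg : IsPartition (addZeta f) (2 * n) := by
    rw [← hfN, ← S_addZeta_bound hf hspec]
    exact hgdiag.isPartition
  refine ⟨addZeta f, fun j hj => addZeta_eq hf hspec hj, hg, ⟨transpose_isPartition hg,
    orth_transpose_of_pairs hgdiag fun t ht => addZeta_pairs hf hspec ht,
    (dom_addZeta hf hspec).transpose_antitone hpart hg⟩, fun μ hμ hμorth hμdom => ?_⟩
  obtain ⟨mμ, hμdiag, -⟩ := hμ.exists_diagram
  have htot : S f m = S (transpose μ) (μ 1) := by
    rw [hfN, (transpose_isPartition hμ).total _ hμdiag.transpose.eq_zero]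
  exact dom_transpose_of_dom_transpose hg hμ <| dom_addZeta_of_dom hf hspec hμdiag.transpose
    (pairs_transpose_of_orth hμdiag hμorth) htot (dom_transpose_of_dom_transpose hμ hpart hμdom)

/-- Lemma 1.7: for a special orthogonal partition `λ` of `2n`, `^t(λ + ζ(λ))` is
the greatest orthogonal partition of `2n` dominated by `^tλ`. -/
theorem stmt1 (n : ℕ) (hn : 1 ≤ n) (f : ℕ → ℕ)
    (hpart : IsPartition f (2*n)) (horth : Orth f) (hspec : SpecialPairs f) :
    ∃ g : ℕ → ℕ,
      (∀ j, 1 ≤ j → (g j : ℤ) = (f j : ℤ) + zetaOE f j) ∧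
      IsPartition g (2*n) ∧
      (IsPartition (transpose g) (2*n) ∧ Orth (transpose g) ∧
        Dom (transpose g) (transpose f)) ∧
      (∀ μ : ℕ → ℕ, IsPartition μ (2*n) → Orth μ → Dom μ (transpose f) →
        Dom μ (transpose g)) :=
  stmt1_general n f hpart horth hspec

end Wald
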